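/- arXiv:math/0604141 — 3 statements merged into one kernel-verified Lean document; each statement's English description precedes it below -/
import Mathlib

section
/- For 0 < ε < 1/3, one has (4ε² + 2(1-ε)²)/(4ε² + (1-ε)²) > (4ε² + 5(1-ε)²)/(4ε² + 3(1-ε)²); i.e., the expected root degree of the conditioned Galton–Watson tree with 3 vertices strictly exceeds that with 4 vertices. -/
/-!
With `a = 4ε²` and `b = (1 - ε)²` the two ratios are `1 + b / (a + b)` and `1 + 2b / (a + 3b)`,
so the first exceeds the second exactly when `2(a + b) < a + 3b`, i.e. `a < b`. For `ε < 1/3`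
this holds because `(1 - ε)² - 4ε² = (1 - 3ε)(1 + ε)`.
-/

lemma add_five_mul_div_lt_add_two_mul_div {a b : ℝ} (ha : 0 ≤ a) (hab : a < b) :
    (a + 5 * b) / (a + 3 * b) < (a + 2 * b) / (a + b) := by
  have hb : 0 < b := ha.trans_lt hab
  rw [div_lt_div_iff₀ (by positivity) (by positivity)]
  nlinarith [mul_lt_mul_of_pos_left hab hb]

lemma four_mul_sq_lt_one_sub_sq {ε : ℝ} (h₁ : -1 < ε) (h₂ : ε < 1 / 3) :
    4 * ε ^ 2 < (1 - ε) ^ 2 := by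
  nlinarith [mul_pos (sub_pos.2 h₂) (neg_lt_iff_pos_add.1 h₁)]

/-- For 0 < ε < 1/3, the expected root degree of the conditioned Galton–Watson tree with
3 vertices strictly exceeds that with 4 vertices:
(4ε²+2(1-ε)²)/(4ε²+(1-ε)²) > (4ε²+5(1-ε)²)/(4ε²+3(1-ε)²). -/
theorem expected_W1_T3_gt_T4 (ε : ℝ) (hε0 : 0 < ε) (hε1 : ε < 1 / 3) :
    (4 * ε ^ 2 + 2 * (1 - ε) ^ 2) / (4 * ε ^ 2 + (1 - ε) ^ 2) >
      (4 * ε ^ 2 + 5 * (1 - ε) ^ 2) / (4 * ε ^ 2 + 3 * (1 - ε) ^ 2) :=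
  add_five_mul_div_lt_add_two_mul_div (by positivity)
    (four_mul_sq_lt_one_sub_sq (by linarith) hε1)
end

section
/- For 0 < ε < 1/5, one has (4ε² + 2(1-ε)²)/(4ε² + (1-ε)²) > 2 - ε; i.e., the expected root degree E[W₁(T₃)] of the conditioned Galton–Watson tree with 3 vertices exceeds 1 + σ² = 2 - ε, where σ² = Var(ξ) = 1 - ε. -/
lemma four_sq_add_one_sub_sq_pos (ε : ℝ) : 0 < 4 * ε ^ 2 + (1 - ε) ^ 2 := by
  nlinarith [sq_nonneg (5 * ε - 1)]

lemma ratio_sub_two_sub_eq (ε : ℝ) :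
    (4 * ε ^ 2 + 2 * (1 - ε) ^ 2) / (4 * ε ^ 2 + (1 - ε) ^ 2) - (2 - ε) =
      ε * (1 - ε) * (1 - 5 * ε) / (4 * ε ^ 2 + (1 - ε) ^ 2) := by
  have hD := (four_sq_add_one_sub_sq_pos ε).ne'
  field_simp
  ring

/-- For 0 < ε < 1/5 the expected root degree of the conditioned Galton–Watson tree with
3 vertices exceeds 1 + σ² = 2 - ε: (4ε²+2(1-ε)²)/(4ε²+(1-ε)²) > 2 - ε. -/
theorem expected_W1_T3_gt_limit (ε : ℝ) (hε0 : 0 < ε) (hε1 : ε < 1 / 5) :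
    (4 * ε ^ 2 + 2 * (1 - ε) ^ 2) / (4 * ε ^ 2 + (1 - ε) ^ 2) > 2 - ε := by
  rw [gt_iff_lt, ← sub_pos, ratio_sub_two_sub_eq]
  exact div_pos (mul_pos (mul_pos hε0 (by linarith)) (by linarith)) (four_sq_add_one_sub_sq_pos ε)
end

section
/- If there exists, for each n, a coupling of T_n and T_∞ with T_n ⊆ T_∞ almost surely, then E[W_k(T_n)] ≤ E[W_k(T_∞)] for all k, n; hence for the offspring distribution p₀=p₂=(1-ε)/2, p₁=ε with 0<ε<1/5, no such coupling exists for n=3. -/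
open MeasureTheory

/-- A rooted tree, encoded as a nonempty prefix-closed set of positions:
a vertex is the list of child-indices on the path from the root to it.
Infinite trees such as the size-biased limit tree T_∞ are allowed. -/
def IsRootedTree (A : Set (List ℕ)) : Prop :=
  [] ∈ A ∧ ∀ l ∈ A, ∀ pre : List ℕ, pre <+: l → pre ∈ A

/-- `levelCount A k` is the number of vertices of `A` at distance `k` from the root. -/
noncomputable def levelCount (A : Set (List ℕ)) (k : ℕ) : ℕ :=
  {l ∈ A | l.length = k}.ncard

/- Since `ncard` of an infinite set is `0`, monotonicity needs the level of the larger tree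
to be finite. -/
lemma levelCount_mono {A B : Set (List ℕ)} (h : A ⊆ B) {k : ℕ}
    (hB : {l ∈ B | l.length = k}.Finite) :
    levelCount A k ≤ levelCount B k :=
  Set.ncard_le_ncard (fun _ hl => ⟨h hl.1, hl.2⟩) hB

lemma lintegral_levelCount_mono {Ω : Type*} [MeasurableSpace Ω] {μ : Measure Ω}
    {S T : Ω → Set (List ℕ)} {k : ℕ}
    (hfin : ∀ᵐ ω ∂μ, {l ∈ T ω | l.length = k}.Finite) (hsub : ∀ᵐ ω ∂μ, S ω ⊆ T ω) :
    ∫⁻ ω, (levelCount (S ω) k : ENNReal) ∂μ ≤ ∫⁻ ω, (levelCount (T ω) k : ENNReal) ∂μ := by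
  refine lintegral_mono_ae ?_
  filter_upwards [hfin, hsub] with ω hf hs
  exact_mod_cast levelCount_mono hs hf

/- The numerator minus `(2 - ε)` times the denominator equals `ε (1 - ε) (1 - 5ε)`. -/
lemma two_sub_lt_div_of_pos_of_lt_one_fifth {ε : ℝ} (hε : 0 < ε) (hε5 : ε < 1 / 5) :
    2 - ε < (4 * ε ^ 2 + 2 * (1 - ε) ^ 2) / (4 * ε ^ 2 + (1 - ε) ^ 2) := by
  have hden : 0 < 4 * ε ^ 2 + (1 - ε) ^ 2 := by positivity
  have hgap : 0 < ε * (1 - ε) * (1 - 5 * ε) := by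
    have : 0 < 1 - ε := by linarith
    have : 0 < 1 - 5 * ε := by linarith
    positivity
  rw [lt_div_iff₀ hden]
  nlinarith

/-- (a) A coupling of T_n and T_∞ with T_n ⊆ T_∞ a.s. forces
E[W_k(T_n)] ≤ E[W_k(T_∞)] for all k; (b) hence, for the offspring distribution
p₀ = p₂ = (1-ε)/2, p₁ = ε with 0 < ε < 1/5, since
E[W₁(T₃)] = (4ε²+2(1-ε)²)/(4ε²+(1-ε)²) > 2-ε = 1+σ² = E[W₁(T_∞)],
no such coupling exists for n = 3 (no coupling can satisfy T₃ ⊆ T_∞ a.s.). -/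
theorem no_coupling_with_limit_tree :
    (∀ {Ω : Type} [MeasurableSpace Ω] (μ : Measure Ω) [IsProbabilityMeasure μ]
        (S T : Ω → Set (List ℕ)),
      (∀ᵐ ω ∂μ, IsRootedTree (S ω)) → (∀ᵐ ω ∂μ, IsRootedTree (T ω)) →
      (∀ᵐ ω ∂μ, ∀ k, {l ∈ T ω | l.length = k}.Finite) →
      (∀ᵐ ω ∂μ, S ω ⊆ T ω) →
      ∀ k : ℕ, ∫⁻ ω, (levelCount (S ω) k : ENNReal) ∂μ ≤
        ∫⁻ ω, (levelCount (T ω) k : ENNReal) ∂μ) ∧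
    (∀ (ε : ℝ), 0 < ε → ε < 1 / 5 →
      ∀ (Ω : Type) (_ : MeasurableSpace Ω) (μ : Measure Ω) (_ : IsProbabilityMeasure μ)
        (S T : Ω → Set (List ℕ)),
      (∀ᵐ ω ∂μ, IsRootedTree (S ω)) → (∀ᵐ ω ∂μ, IsRootedTree (T ω)) →
      (∀ᵐ ω ∂μ, ∀ k, {l ∈ T ω | l.length = k}.Finite) →
      -- S is distributed as T₃: E[W₁(T₃)] = (4ε²+2(1-ε)²)/(4ε²+(1-ε)²)
      (∫⁻ ω, (levelCount (S ω) 1 : ENNReal) ∂μ =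
        ENNReal.ofReal ((4 * ε ^ 2 + 2 * (1 - ε) ^ 2) / (4 * ε ^ 2 + (1 - ε) ^ 2))) →
      -- T is distributed as T_∞: E[W₁(T_∞)] = 1 + σ² = 2 - ε
      (∫⁻ ω, (levelCount (T ω) 1 : ENNReal) ∂μ = ENNReal.ofReal (2 - ε)) →
      ¬ (∀ᵐ ω ∂μ, S ω ⊆ T ω)) := by
  refine ⟨fun μ _ S T _ _ hfin hsub k =>
    lintegral_levelCount_mono (hfin.mono fun _ h => h k) hsub, ?_⟩
  intro ε hε hε5 Ω _ μ _ S T _ _ hfin hS hT hsub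
  have hmono := lintegral_levelCount_mono (hfin.mono fun _ h => h 1) hsub
  rw [hS, hT, ENNReal.ofReal_le_ofReal_iff (by linarith)] at hmono
  exact (two_sub_lt_div_of_pos_of_lt_one_fifth hε hε5).not_ge hmono
end
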